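/- Let p : X → Y be a morphism of simplicial sets such that for every diagram of pullback squares X'' → X' → X over Δ[0] → Δ[m] → Y (i.e. X' is the pullback of p along a simplex Δ[m] → Y and X'' is the further pullback along a vertex Δ[0] → Δ[m]), the induced map X'' → X' is a weak homotopy equivalence. Then for every diagram of pullback squares X'' → X' → X over Δ[n] → Δ[m] → Y, the induced map X'' → X' is a weak homotopy equivalence. -/

import Mathlib

/-!
Compose `j : Δ[n] ⟶ Δ[m]` with a vertex `i₀ : Δ[0] ⟶ Δ[n]`. The pullback of `p` along
`i₀ ≫ j ≫ x` maps to the pullback along `j ≫ x` and then to the pullback along `x`, and both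
the first map and the composite are pullbacks along vertices, hence weak equivalences by
hypothesis. Two-out-of-three then makes the middle map a weak equivalence.
-/

open CategoryTheory Simplicial CategoryTheory.Limits SSet

universe u

namespace ThmB

/-- The cylinder `Δ[1] × X` of a simplicial set, defined objectwise. -/
def cyl (X : SSet.{u}) : SSet.{u} where
  obj n := (Δ[1] : SSet.{u}).obj n × X.obj n
  map f := TypeCat.ofHom fun a => ((Δ[1] : SSet.{u}).map f a.1, X.map f a.2)
  map_id n := by ext a <;> simp
  map_comp f g := by ext a <;> simp

/-- Functoriality of the cylinder. -/
def cylMap {X Y : SSet.{u}} (f : X ⟶ Y) : cyl X ⟶ cyl Y where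
  app n := TypeCat.ofHom fun a => (a.1, f.app n a.2)
  naturality n m g := by
    ext a
    change ((Δ[1] : SSet.{u}).map g a.1, f.app m (X.map g a.2)) = ((Δ[1] : SSet.{u}).map g a.1, Y.map g (f.app n a.2))
    rw [NatTrans.naturality_apply]

/-- The vertex `i` of `Δ[1]`, as an `n`-simplex. -/
def v (i : Fin 2) (n : SimplexCategoryᵒᵖ) : (Δ[1] : SSet.{u}).obj n :=
  stdSimplex.const 1 i n

/-- `H` is a simplicial homotopy from `f` to `g`. -/
def IsHomotopy {X Y : SSet.{u}} (H : cyl X ⟶ Y) (f g : X ⟶ Y) : Prop :=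
  (∀ n (x : X.obj n), H.app n (v 0 n, x) = f.app n x) ∧
  (∀ n (x : X.obj n), H.app n (v 1 n, x) = g.app n x)

/-- Two maps of simplicial sets are (directly) homotopic. -/
def Homotopic {X Y : SSet.{u}} (f g : X ⟶ Y) : Prop :=
  ∃ H : cyl X ⟶ Y, IsHomotopy H f g

lemma homotopic_precomp {X Y K : SSet.{u}} (f : X ⟶ Y) (g g' : Y ⟶ K)
    (h : Homotopic g g') : Homotopic (f ≫ g) (f ≫ g') := by
  obtain ⟨H, h0, h1⟩ := h
  exact ⟨cylMap f ≫ H, fun n x => h0 n (f.app n x), fun n x => h1 n (f.app n x)⟩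

/-- Kan complexes with the meaning `SSet.KanComplex` had in the original library. -/
def OldKanComplex (S : SSet.{u}) : Prop :=
  ∀ ⦃n : ℕ⦄ ⦃i : Fin (n + 1)⦄ (σ₀ : (Λ[n, i] : SSet.{u}) ⟶ S),
    ∃ σ : Δ[n] ⟶ S, σ₀ = Λ[n, i].ι ≫ σ

/-- A map of simplicial sets is a weak homotopy equivalence iff for every Kan
complex `K` it induces a bijection on homotopy classes of maps into `K`. -/
def IsWeakHomotopyEquiv {X Y : SSet.{u}} (f : X ⟶ Y) : Prop :=
  ∀ (K : SSet.{u}), OldKanComplex K →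
    Function.Bijective
      (Quot.map (fun g : Y ⟶ K => f ≫ g) (homotopic_precomp f) :
        Quot (Homotopic (X := Y) (Y := K)) → Quot (Homotopic (X := X) (Y := K)))

/-- Kan fibrations: right lifting property against all horn inclusions. -/
def IsKanFibration {X Y : SSet.{u}} (p : X ⟶ Y) : Prop :=
  ∀ (n : ℕ) (i : Fin (n + 2)), HasLiftingProperty (Λ[n + 1, i].ι) p

/-- A commutative square is a homotopy pullback square if after factoring `g`
as a weak equivalence followed by a Kan fibration, the induced comparison map
to the actual pullback is a weak equivalence. -/
def IsHomotopyPullback {P X Y Z : SSet.{u}} (p₁ : P ⟶ X) (p₂ : P ⟶ Y)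
    (f : X ⟶ Z) (g : Y ⟶ Z) : Prop :=
  ∃ (E : SSet.{u}) (w : Y ⟶ E) (q : E ⟶ Z) (l : P ⟶ pullback f q),
    IsWeakHomotopyEquiv w ∧ IsKanFibration q ∧ g = w ≫ q ∧
    l ≫ pullback.fst f q = p₁ ∧ l ≫ pullback.snd f q = p₂ ≫ w ∧
    IsWeakHomotopyEquiv l

lemma IsWeakHomotopyEquiv.of_precomp {A B C : SSet.{u}} {f : A ⟶ B} {g : B ⟶ C}
    (hf : IsWeakHomotopyEquiv f) (hfg : IsWeakHomotopyEquiv (f ≫ g)) :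
    IsWeakHomotopyEquiv g := by
  intro K hK
  have induced_comp :
      (Quot.map (fun h : C ⟶ K => (f ≫ g) ≫ h) (homotopic_precomp (f ≫ g)) :
        Quot (Homotopic (X := C) (Y := K)) → Quot (Homotopic (X := A) (Y := K))) =
      Quot.map (fun h => f ≫ h) (homotopic_precomp f) ∘
        Quot.map (fun h => g ≫ h) (homotopic_precomp g) := by
    funext q
    induction q using Quot.ind
    simp only [Function.comp_apply, Quot.map, Category.assoc]
  exact ((hf K hK).of_comp_iff' _).mp (induced_comp ▸ hfg K hK)

lemma pullback.map_comp_map_id {C : Type*} [Category C] [HasPullbacks C] {A B S X Y : C}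
    (i : A ⟶ B) (j : B ⟶ S) (x : S ⟶ Y) (p : X ⟶ Y) :
    pullback.map (i ≫ j ≫ x) p (j ≫ x) p i (𝟙 X) (𝟙 Y) (by simp) (by simp) ≫
        pullback.map (j ≫ x) p x p j (𝟙 X) (𝟙 Y) (by simp) (by simp) =
      pullback.map (i ≫ j ≫ x) p x p (i ≫ j) (𝟙 X) (𝟙 Y) (by simp) (by simp) := by
  simp only [pullback.map_comp, Category.comp_id]

/-- If pulling back `p` along vertices of simplices of `Y`
always gives weak equivalences, then pulling back along any map
`Δ[n] ⟶ Δ[m]` of simplices of `Y` gives weak equivalences. -/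
theorem statement0 {X Y : SSet.{u}} (p : X ⟶ Y)
    (hyp : ∀ (m : ℕ) (x : Δ[m] ⟶ Y) (i : Δ[0] ⟶ Δ[m]),
      IsWeakHomotopyEquiv
        (pullback.map (i ≫ x) p x p i (𝟙 X) (𝟙 Y) (by simp) (by simp))) :
    ∀ (n m : ℕ) (x : Δ[m] ⟶ Y) (j : Δ[n] ⟶ Δ[m]),
      IsWeakHomotopyEquiv
        (pullback.map (j ≫ x) p x p j (𝟙 X) (𝟙 Y) (by simp) (by simp)) := by
  intro n m x j
  let i₀ : Δ[0] ⟶ Δ[n] := SSet.stdSimplex.map (SimplexCategory.const _ _ 0)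
  refine (hyp n (j ≫ x) i₀).of_precomp ?_
  rw [pullback.map_comp_map_id]
  -- accepted because `(i₀ ≫ j) ≫ x` and `i₀ ≫ j ≫ x` agree definitionally in `SSet`
  exact hyp m x (i₀ ≫ j)

end ThmB
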